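/- For every real μ > −1/2 and every z > 0, s_{μ,1/2}(z) = z^{μ} ∫₀¹ (1−t)^{μ−1/2} sin(zt) dt. -/

import Mathlib

/-!
Expand `sin (z t)` in its Taylor series and integrate term by term against the weight
`(1 - t) ^ (μ - 1/2)`, which is integrable on `[0, 1]` since `μ > -1/2` (dominated convergence).
The `k`-th term is a Beta integral,
`∫₀¹ (1 - t) ^ (μ - 1/2) t ^ (2k+1) dt = (2k+1)! / ∏_{j < 2k+2} (μ + 1/2 + j)`,
and for `ν = 1/2` each factor `(μ + 2j + 1)² - 1/4` of the Lommel denominator splits as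
`(μ + 1/2 + 2j)(μ + 1/2 + 2j + 1)`, so the two series agree term by term.
-/

open Real

/-- The Lommel function `s_{μ,ν}(z)`, defined for `z > 0` by its convergent series. -/
noncomputable def lommelS (μ ν z : ℝ) : ℝ :=
  ∑' k : ℕ, (-1 : ℝ) ^ k * z ^ (μ + 2 * (k : ℝ) + 1) /
    ∏ j ∈ Finset.range (k + 1), ((μ + 2 * (j : ℝ) + 1) ^ 2 - ν ^ 2)

open Nat MeasureTheory Finset Set

theorem integral_one_sub_rpow_mul_pow {a : ℝ} (ha : 0 < a) (n : ℕ) :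
    ∫ t in (0:ℝ)..1, (1 - t) ^ (a - 1) * t ^ n = n ! / ∏ j ∈ range (n + 1), (a + j) := by
  have hβ := Complex.betaIntegral_eval_nat_add_one_right (u := a) (by simpa using ha) n
  rw [← Complex.betaIntegral_symm] at hβ
  have hcast : ((∫ t in (0:ℝ)..1, (1 - t) ^ (a - 1) * t ^ n : ℝ) : ℂ)
      = Complex.betaIntegral ((n : ℂ) + 1) (a : ℂ) := by
    rw [Complex.betaIntegral, ← intervalIntegral.integral_ofReal]
    refine intervalIntegral.integral_congr fun t ht => ?_
    rw [Set.uIcc_of_le zero_le_one] at ht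
    push_cast
    rw [Complex.ofReal_cpow (by linarith [ht.2]), add_sub_cancel_right, Complex.cpow_natCast]
    push_cast
    ring
  have h : ((∫ t in (0:ℝ)..1, (1 - t) ^ (a - 1) * t ^ n : ℝ) : ℂ)
      = ((n ! / ∏ j ∈ range (n + 1), (a + j) : ℝ) : ℂ) := by
    rw [hcast, hβ]
    push_cast
    ring
  exact_mod_cast h

theorem prod_sq_sub_one_div_two_sq (μ : ℝ) (k : ℕ) :
    ∏ j ∈ range (k + 1), ((μ + 2 * (j : ℝ) + 1) ^ 2 - (1 / 2) ^ 2)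
      = ∏ j ∈ range (2 * k + 2), (μ + 1 / 2 + j) := by
  induction k with
  | zero => simp [prod_range_succ]; ring
  | succ k ih =>
    rw [prod_range_succ, ih, show 2 * (k + 1) + 2 = 2 * k + 2 + 1 + 1 by ring,
      prod_range_succ _ (2 * k + 2 + 1), prod_range_succ _ (2 * k + 2)]
    push_cast
    ring

theorem hasSum_integral_mul_sin {g : ℝ → ℝ} (hg : IntervalIntegrable g volume 0 1) (z : ℝ) :
    HasSum (fun k : ℕ => (-1) ^ k * z ^ (2 * k + 1) / (2 * k + 1)! *
        ∫ t in (0:ℝ)..1, g t * t ^ (2 * k + 1))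
      (∫ t in (0:ℝ)..1, g t * sin (z * t)) := by
  set c : ℕ → ℝ := fun k => |z| ^ (2 * k + 1) / (2 * k + 1)!
  have hc : Summable c :=
    (summable_pow_div_factorial |z|).comp_injective fun k l h => by omega
  simp_rw [← intervalIntegral.integral_const_mul]
  refine intervalIntegral.hasSum_integral_of_dominated_convergence (fun k t => c k * ‖g t‖)
    (fun k => ?_) (fun k => ?_) (ae_of_all _ fun t _ => hc.mul_right _) ?_ ?_
  · exact aestronglyMeasurable_const.mul <| hg.def'.aestronglyMeasurable.mul <|
      (continuous_pow (2 * k + 1)).aestronglyMeasurable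
  · refine ae_of_all _ fun t ht => ?_
    rw [Set.uIoc_of_le zero_le_one] at ht
    have ht_pow : |t| ^ (2 * k + 1) ≤ 1 := by
      rw [abs_of_pos ht.1]
      exact pow_le_one₀ ht.1.le ht.2
    calc ‖(-1) ^ k * z ^ (2 * k + 1) / (2 * k + 1)! * (g t * t ^ (2 * k + 1))‖
        = c k * ‖g t‖ * |t| ^ (2 * k + 1) := by
          simp only [c, norm_mul, norm_div, norm_pow, norm_neg, norm_one, one_pow, one_mul,
            Real.norm_eq_abs, Nat.abs_cast]
          ring
      _ ≤ c k * ‖g t‖ := mul_le_of_le_one_right (by positivity) ht_pow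
  · simp only [tsum_mul_right]
    exact hg.norm.const_mul _
  · refine ae_of_all _ fun t _ => ?_
    simpa only [mul_pow, mul_div_assoc, mul_left_comm, mul_assoc, mul_comm] using
      (hasSum_sin (z * t)).mul_left (g t)

theorem lommelS_half_term {μ z : ℝ} (hμ : -1 / 2 < μ) (hz : 0 < z) (k : ℕ) :
    (-1 : ℝ) ^ k * z ^ (μ + 2 * (k : ℝ) + 1) /
        ∏ j ∈ range (k + 1), ((μ + 2 * (j : ℝ) + 1) ^ 2 - (1 / 2) ^ 2)
      = z ^ μ * ((-1) ^ k * z ^ (2 * k + 1) / (2 * k + 1)! *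
        ∫ t in (0:ℝ)..1, (1 - t) ^ (μ - 1 / 2) * t ^ (2 * k + 1)) := by
  have hbeta := integral_one_sub_rpow_mul_pow (a := μ + 1 / 2) (by linarith) (2 * k + 1)
  rw [show μ + 1 / 2 - 1 = μ - 1 / 2 by ring] at hbeta
  have hprod : 0 < ∏ j ∈ range (2 * k + 2), (μ + 1 / 2 + j) :=
    prod_pos fun j _ => by linarith [j.cast_nonneg (α := ℝ)]
  have hexp : μ + 2 * (k : ℝ) + 1 = μ + ((2 * k + 1 : ℕ) : ℝ) := by push_cast; ring
  rw [hbeta, prod_sq_sub_one_div_two_sq, hexp, rpow_add hz, rpow_natCast]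
  field_simp

theorem stmt1 (μ : ℝ) (hμ : -1/2 < μ) (z : ℝ) (hz : 0 < z) :
    lommelS μ (1/2) z = z ^ μ * ∫ t in (0:ℝ)..1, (1 - t) ^ (μ - 1/2) * Real.sin (z * t) := by
  have hweight : IntervalIntegrable (fun t : ℝ => (1 - t) ^ (μ - 1 / 2)) volume 0 1 := by
    have hpow : IntervalIntegrable (fun t : ℝ => t ^ (μ - 1 / 2)) volume 0 1 :=
      intervalIntegral.intervalIntegrable_rpow' (by linarith)
    simpa using (hpow.comp_sub_left 1).symm
  rw [lommelS, ← (hasSum_integral_mul_sin hweight z).tsum_eq, ← tsum_mul_left]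
  exact tsum_congr (lommelS_half_term hμ hz)
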